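/- arXiv:2510.21186 — 3 statements merged into one kernel-verified Lean document; each statement's English description precedes it below -/
import Mathlib

section
/- Gauss's summation theorem: if Re(γ - α - β) > 0 and γ is not a nonpositive integer, then the hypergeometric series F(α,β;γ;1) = Σ_{m≥0} (α)_m (β)_m / (m! (γ)_m) converges and equals Γ(γ)Γ(γ-α-β)/(Γ(γ-α)Γ(γ-β)). -/
/-!
Euler's limit formula, in the form `(s)ₙ₊₁ = nˢ n! / GammaSeq s n`, shows that the coefficients
`c_m` of `F(α,β;γ;1)` satisfy `(m+1) c_{m+1} = O(m^{-Re(γ-α-β)})`. This gives convergence, and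
makes `Σ_m (γ(γ-α-β) c_m(γ) - (γ-α)(γ-β) c_m(γ+1))` telescope to `0`. Iterating the resulting
contiguous relation `γ(γ-α-β) F(γ) = (γ-α)(γ-β) F(γ+1)` gives `F(γ) = Pₙ F(γ+n)` with
`Pₙ = ∏_{k<n} (γ-α+k)(γ-β+k) / ((γ+k)(γ-α-β+k))`. Euler's limit formula again gives
`Pₙ → Γ(γ)Γ(γ-α-β)/(Γ(γ-α)Γ(γ-β))`, while `F(γ+n) → 1` by dominated convergence.
-/

open Finset Filter Topology Complex Asymptotics
open scoped Nat

namespace Complex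

-- No hypothesis on `s`: when the product vanishes, so does `GammaSeq s n`, by `x / 0 = 0`.
theorem prod_range_succ_eq_div_GammaSeq {n : ℕ} (hn : n ≠ 0) (s : ℂ) :
    ∏ j ∈ range (n + 1), (s + j) = (n : ℂ) ^ s * n ! / GammaSeq s n := by
  have hn' : (n : ℂ) ^ s * n ! ≠ 0 :=
    mul_ne_zero (by simp [cpow_eq_zero_iff, hn]) (by exact_mod_cast n.factorial_ne_zero)
  rw [GammaSeq, div_div_cancel₀ hn']

theorem GammaSeq_eventually_eq_zero {s : ℂ} (hs : Gamma s = 0) :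
    ∀ᶠ n in atTop, GammaSeq s n = 0 := by
  obtain ⟨k, rfl⟩ : ∃ k : ℕ, s = -k := by
    by_contra! h
    exact Gamma_ne_zero h hs
  filter_upwards [eventually_ge_atTop k] with n hn
  rw [GammaSeq, prod_eq_zero (mem_range.mpr (Nat.lt_succ_of_le hn)) (by ring), div_zero]

theorem tendsto_div_GammaSeq_mul_GammaSeq {f : ℕ → ℂ} {L : ℂ}
    (hf : Tendsto f atTop (𝓝 L)) (a b : ℂ) :
    Tendsto (fun n ↦ f n / (GammaSeq a n * GammaSeq b n)) atTop
      (𝓝 (L / (Gamma a * Gamma b))) := by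
  by_cases h : Gamma a * Gamma b = 0
  -- then `a` or `b` is a nonpositive integer and both sides are eventually `x / 0 = 0`
  · rw [h, div_zero]
    refine tendsto_const_nhds.congr' ?_
    rcases mul_eq_zero.mp h with ha | hb
    · filter_upwards [GammaSeq_eventually_eq_zero ha] with n hn
      rw [hn, zero_mul, div_zero]
    · filter_upwards [GammaSeq_eventually_eq_zero hb] with n hn
      rw [hn, mul_zero, div_zero]
  · exact hf.div ((GammaSeq_tendsto_Gamma a).mul (GammaSeq_tendsto_Gamma b)) h

theorem tendsto_prod_div_prod_Gamma {a b c d : ℂ} (h : a + b = c + d) :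
    Tendsto (fun n : ℕ ↦
        (∏ k ∈ range n, ((a + k) * (b + k))) / ∏ k ∈ range n, ((c + k) * (d + k)))
      atTop (𝓝 (Gamma c * Gamma d / (Gamma a * Gamma b))) := by
  rw [← tendsto_add_atTop_iff_nat 1]
  refine ((tendsto_div_GammaSeq_mul_GammaSeq
    ((GammaSeq_tendsto_Gamma c).mul (GammaSeq_tendsto_Gamma d)) a b)).congr' ?_
  filter_upwards [eventually_ne_atTop 0] with n hn
  have hpow : (n : ℂ) ^ c * (n : ℂ) ^ d = (n : ℂ) ^ a * (n : ℂ) ^ b := by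
    rw [← cpow_add _ _ (by exact_mod_cast hn), ← cpow_add _ _ (by exact_mod_cast hn), h]
  have hne : ∀ s : ℂ, (n : ℂ) ^ s ≠ 0 := fun s ↦ by simp [cpow_eq_zero_iff, hn]
  have hfac : (n ! : ℂ) ≠ 0 := by exact_mod_cast n.factorial_ne_zero
  simp only [prod_mul_distrib, prod_range_succ_eq_div_GammaSeq hn]
  field_simp
  rw [mul_assoc (GammaSeq a n * _), hpow, mul_assoc (GammaSeq c n * _),
    mul_div_mul_right _ _ (mul_ne_zero (hne a) (hne b))]

end Complex

noncomputable def hypergeomCoeff (α β γ : ℂ) (m : ℕ) : ℂ :=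
  (∏ j ∈ range m, (α + j)) * (∏ j ∈ range m, (β + j)) /
    ((m ! : ℂ) * ∏ j ∈ range m, (γ + j))

section

variable (α β γ : ℂ)

theorem hypergeomCoeff_succ (m : ℕ) :
    hypergeomCoeff α β γ (m + 1) =
      hypergeomCoeff α β γ m * ((α + m) * (β + m) / ((m + 1) * (γ + m))) := by
  rw [hypergeomCoeff, hypergeomCoeff, prod_range_succ, prod_range_succ, prod_range_succ,
    Nat.factorial_succ, div_mul_div_comm]
  push_cast
  ring

theorem add_one_mul_hypergeomCoeff_succ {n : ℕ} (hn : n ≠ 0) :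
    ((n : ℂ) + 1) * hypergeomCoeff α β γ (n + 1) =
      (n : ℂ) ^ (α + β - γ) * (GammaSeq γ n / (GammaSeq α n * GammaSeq β n)) := by
  have hn' : (n : ℂ) ≠ 0 := by exact_mod_cast hn
  have hne : ∀ s : ℂ, (n : ℂ) ^ s ≠ 0 := fun s ↦ by simp [cpow_eq_zero_iff, hn]
  have hfac : (n ! : ℂ) ≠ 0 := by exact_mod_cast n.factorial_ne_zero
  rw [hypergeomCoeff, prod_range_succ_eq_div_GammaSeq hn, prod_range_succ_eq_div_GammaSeq hn,
    prod_range_succ_eq_div_GammaSeq hn, cpow_sub _ _ hn', cpow_add _ _ hn', Nat.factorial_succ]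
  push_cast
  field_simp

theorem isBigO_add_one_mul_hypergeomCoeff_succ :
    (fun n : ℕ ↦ ((n : ℂ) + 1) * hypergeomCoeff α β γ (n + 1)) =O[atTop]
      fun n : ℕ ↦ (n : ℝ) ^ (-(γ - α - β).re) := by
  have hpow : (fun n : ℕ ↦ (n : ℂ) ^ (α + β - γ)) =O[atTop]
      fun n : ℕ ↦ (n : ℝ) ^ (-(γ - α - β).re) := by
    refine IsBigO.of_bound 1 ?_
    filter_upwards [eventually_ne_atTop 0] with n hn
    rw [norm_natCast_cpow_of_pos (Nat.pos_of_ne_zero hn), Real.norm_of_nonneg (by positivity)]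
    simp only [add_re, sub_re, neg_sub, one_mul]
    ring_nf
    rfl
  have hratio :=
    (tendsto_div_GammaSeq_mul_GammaSeq (GammaSeq_tendsto_Gamma γ) α β).isBigO_one ℝ
  refine (hpow.mul hratio).congr' ?_ (by simp)
  filter_upwards [eventually_ne_atTop 0] with n hn
  exact (add_one_mul_hypergeomCoeff_succ α β γ hn).symm

theorem summable_norm_hypergeomCoeff (h : 0 < (γ - α - β).re) :
    Summable fun m ↦ ‖hypergeomCoeff α β γ m‖ := by
  rw [← summable_nat_add_iff 1]
  have hinv :
      (fun n : ℕ ↦ ((n : ℂ) + 1)⁻¹) =O[atTop] fun n : ℕ ↦ (n : ℝ) ^ (-1 : ℝ) := by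
    refine IsBigO.of_bound 1 ?_
    filter_upwards [eventually_ne_atTop 0] with n hn
    rw [norm_inv, ← Nat.cast_add_one, norm_natCast, Real.rpow_neg_one, one_mul, norm_inv,
      Real.norm_natCast]
    exact inv_anti₀ (Nat.cast_pos.mpr (Nat.pos_of_ne_zero hn)) (by simp)
  have hsum : Summable fun n : ℕ ↦ (n : ℝ) ^ (-1 - (γ - α - β).re) :=
    Real.summable_nat_rpow.mpr (by linarith)
  refine summable_of_isBigO_nat hsum
    ((hinv.mul (isBigO_add_one_mul_hypergeomCoeff_succ α β γ)).norm_left.congr' ?_ ?_)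
  · filter_upwards with n
    rw [inv_mul_cancel_left₀ (by exact_mod_cast n.succ_ne_zero)]
  · filter_upwards [eventually_ne_atTop 0] with n hn
    rw [← Real.rpow_add (by positivity)]
    ring_nf

theorem tendsto_natCast_mul_hypergeomCoeff (h : 0 < (γ - α - β).re) :
    Tendsto (fun m : ℕ ↦ (m : ℂ) * hypergeomCoeff α β γ m) atTop (𝓝 0) := by
  rw [← tendsto_add_atTop_iff_nat 1]
  push_cast
  exact (isBigO_add_one_mul_hypergeomCoeff_succ α β γ).trans_tendsto
    ((tendsto_rpow_neg_atTop h).comp tendsto_natCast_atTop_atTop)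

theorem hypergeomCoeff_add_one (hγ : ∀ j : ℕ, γ + j ≠ 0) (m : ℕ) :
    γ * hypergeomCoeff α β γ m = (γ + m) * hypergeomCoeff α β (γ + 1) m := by
  have hP : ∏ j ∈ range m, (γ + j) ≠ 0 := prod_ne_zero_iff.mpr fun j _ ↦ hγ j
  have hP' : ∏ j ∈ range m, (γ + 1 + j) ≠ 0 := prod_ne_zero_iff.mpr fun j _ ↦ by
    simpa [add_assoc, add_comm 1 (j : ℂ)] using hγ (j + 1)
  have key : (∏ j ∈ range m, (γ + j)) * (γ + m) = γ * ∏ j ∈ range m, (γ + 1 + j) := by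
    rw [← prod_range_succ, prod_range_succ']
    push_cast
    simp only [add_assoc, add_comm (1 : ℂ), add_zero, mul_comm]
  have hfac : (m ! : ℂ) ≠ 0 := by exact_mod_cast m.factorial_ne_zero
  simp only [hypergeomCoeff]
  field_simp
  linear_combination (-(∏ j ∈ range m, (α + j)) * ∏ j ∈ range m, (β + j)) * key

theorem re_add_natCast_sub_pos (h : 0 < (γ - α - β).re) (k : ℕ) :
    0 < (γ + k - α - β).re := by
  rw [add_sub_right_comm, add_sub_right_comm, add_re, natCast_re]
  positivity

theorem tsum_hypergeomCoeff_contiguous (h : 0 < (γ - α - β).re)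
    (hγ : ∀ j : ℕ, γ + j ≠ 0) :
    γ * (γ - α - β) * ∑' m, hypergeomCoeff α β γ m =
      (γ - α) * (γ - β) * ∑' m, hypergeomCoeff α β (γ + 1) m := by
  let c (m : ℕ) : ℂ := γ * (m * hypergeomCoeff α β γ m)
  have hstep (m : ℕ) : γ * (γ - α - β) * hypergeomCoeff α β γ m -
      (γ - α) * (γ - β) * hypergeomCoeff α β (γ + 1) m = c m - c (m + 1) := by
    have hm : (m : ℂ) + 1 ≠ 0 := by exact_mod_cast m.succ_ne_zero
    have hγm : γ + 1 + m ≠ 0 := by simpa [add_assoc, add_comm 1 (m : ℂ)] using hγ (m + 1)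
    have hsucc : c (m + 1) = (α + m) * (β + m) * hypergeomCoeff α β (γ + 1) m := by
      simp only [c]
      rw [mul_left_comm, hypergeomCoeff_add_one α β γ hγ, hypergeomCoeff_succ]
      push_cast
      field_simp
      ring
    rw [hsucc]
    linear_combination (γ - α - β - m) * hypergeomCoeff_add_one α β γ hγ m
  have hT := (summable_norm_hypergeomCoeff α β γ h).of_norm
  have hT' := (summable_norm_hypergeomCoeff α β (γ + 1)
    (by exact_mod_cast re_add_natCast_sub_pos α β γ h 1)).of_norm
  have hsum := ((hT.hasSum.mul_left (γ * (γ - α - β))).sub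
    (hT'.hasSum.mul_left ((γ - α) * (γ - β)))).tendsto_sum_nat
  have hpartial : Tendsto (fun n ↦ -c n) atTop (𝓝 0) := by
    simpa using ((tendsto_natCast_mul_hypergeomCoeff α β γ h).const_mul γ).neg
  simp only [hstep, sum_range_sub', c, Nat.cast_zero, zero_mul, mul_zero, zero_sub] at hsum
  exact sub_eq_zero.mp (tendsto_nhds_unique hsum hpartial)

theorem prod_mul_tsum_hypergeomCoeff (h : 0 < (γ - α - β).re) (hγ : ∀ j : ℕ, γ + j ≠ 0)
    (n : ℕ) :
    (∏ k ∈ range n, ((γ + k) * (γ - α - β + k))) * ∑' m, hypergeomCoeff α β γ m =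
      (∏ k ∈ range n, ((γ - α + k) * (γ - β + k))) *
        ∑' m, hypergeomCoeff α β (γ + n) m := by
  induction n with
  | zero => simp
  | succ n ih =>
    have hγn : ∀ j : ℕ, γ + n + j ≠ 0 := fun j ↦ by simpa [add_assoc] using hγ (n + j)
    have hcontig := tsum_hypergeomCoeff_contiguous α β (γ + n)
      (re_add_natCast_sub_pos α β γ h n) hγn
    rw [prod_range_succ, prod_range_succ, Nat.cast_succ, ← add_assoc]
    linear_combination (γ + n) * (γ - α - β + n) * ih +
      (∏ k ∈ range n, ((γ - α + k) * (γ - β + k))) * hcontig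

theorem norm_hypergeomCoeff_add_natCast_le (hγ : ∀ j : ℕ, γ + j ≠ 0) {n : ℕ}
    (hn : 2 * ‖γ‖ ≤ n) (m : ℕ) :
    ‖hypergeomCoeff α β (γ + n) m‖ ≤ ‖hypergeomCoeff α β γ m‖ := by
  have hle : ∀ j ∈ range m, ‖γ + j‖ ≤ ‖γ + n + j‖ := fun j _ ↦ by
    have h₁ : ‖γ + j‖ ≤ ‖γ‖ + j := by simpa using norm_add_le γ (j : ℂ)
    have h₂ : (n : ℝ) + j - ‖γ‖ ≤ ‖γ + n + j‖ := by
      have := norm_sub_norm_le ((n + j : ℕ) : ℂ) (-γ)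
      simp only [norm_natCast, norm_neg] at this
      push_cast at this
      rwa [show (n : ℂ) + j - -γ = γ + n + j by ring] at this
    linarith
  have hpos : 0 < ∏ j ∈ range m, ‖γ + j‖ := prod_pos fun j _ ↦ norm_pos_iff.mpr (hγ j)
  simp only [hypergeomCoeff, norm_div, norm_mul, norm_prod]
  gcongr with j hj
  · exact mul_pos (norm_pos_iff.mpr (by exact_mod_cast m.factorial_ne_zero)) hpos
  · exact hle j hj

theorem tendsto_hypergeomCoeff_add_natCast (m : ℕ) :
    Tendsto (fun n : ℕ ↦ hypergeomCoeff α β (γ + n) m) atTop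
      (𝓝 (if m = 0 then 1 else 0)) := by
  rcases m with _ | m
  · simp [hypergeomCoeff]
  have hinv (j : ℕ) : Tendsto (fun n : ℕ ↦ (γ + n + j)⁻¹) atTop (𝓝 0) := by
    refine tendsto_inv₀_cobounded.comp
      (((tendsto_add_const_cobounded (γ + j)).comp tendsto_natCast_atTop_cobounded).congr
        fun n ↦ ?_)
    simp only [Function.comp_apply]
    ring
  have hprod := (tendsto_finsetProd (range (m + 1)) fun j _ ↦ hinv j).const_mul
    ((∏ j ∈ range (m + 1), (α + j)) * (∏ j ∈ range (m + 1), (β + j)) / ((m + 1)! : ℂ))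
  rw [show ∏ _j ∈ range (m + 1), (0 : ℂ) = 0 by simp, mul_zero] at hprod
  rw [if_neg m.succ_ne_zero]
  refine hprod.congr fun n ↦ ?_
  rw [hypergeomCoeff, prod_inv_distrib]
  ring

theorem tendsto_tsum_hypergeomCoeff_add_natCast (h : 0 < (γ - α - β).re)
    (hγ : ∀ j : ℕ, γ + j ≠ 0) :
    Tendsto (fun n : ℕ ↦ ∑' m, hypergeomCoeff α β (γ + n) m) atTop (𝓝 1) := by
  have hlim := tendsto_tsum_of_dominated_convergence (summable_norm_hypergeomCoeff α β γ h)
    (tendsto_hypergeomCoeff_add_natCast α β γ) ?_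
  · rwa [tsum_ite_eq] at hlim
  filter_upwards [tendsto_natCast_atTop_atTop.eventually_ge_atTop (2 * ‖γ‖)] with n hn
  exact norm_hypergeomCoeff_add_natCast_le α β γ hγ hn

end

/-- Gauss's summation theorem: if `Re(γ - α - β) > 0` and `γ` is not a nonpositive
integer, then the hypergeometric series `F(α,β;γ;1) = Σ_m (α)_m (β)_m / (m! (γ)_m)`
converges, with sum `Γ(γ)Γ(γ-α-β)/(Γ(γ-α)Γ(γ-β))`. -/
theorem gauss_summation (α β γ : ℂ) (h1 : 0 < (γ - α - β).re)
    (h2 : ∀ m : ℕ, γ ≠ -(m : ℂ)) :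
    HasSum
      (fun m : ℕ =>
        (∏ j ∈ Finset.range m, (α + j)) * (∏ j ∈ Finset.range m, (β + j)) /
          ((m.factorial : ℂ) * ∏ j ∈ Finset.range m, (γ + j)))
      (Complex.Gamma γ * Complex.Gamma (γ - α - β) /
        (Complex.Gamma (γ - α) * Complex.Gamma (γ - β))) := by
  have hγ (j : ℕ) : γ + j ≠ 0 := fun hj ↦ h2 j (eq_neg_of_add_eq_zero_left hj)
  have hQ (n : ℕ) : ∏ k ∈ range n, ((γ + k) * (γ - α - β + k)) ≠ 0 :=
    prod_ne_zero_iff.mpr fun k _ ↦ mul_ne_zero (hγ k) <| ne_zero_of_re_pos <| by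
      simpa only [add_sub_right_comm] using re_add_natCast_sub_pos α β γ h1 k
  have hfactor (n : ℕ) :
      (∏ k ∈ range n, ((γ - α + k) * (γ - β + k))) /
          (∏ k ∈ range n, ((γ + k) * (γ - α - β + k))) *
          ∑' m, hypergeomCoeff α β (γ + n) m =
        ∑' m, hypergeomCoeff α β γ m := by
    rw [div_mul_eq_mul_div, div_eq_iff (hQ n), ← prod_mul_tsum_hypergeomCoeff α β γ h1 hγ,
      mul_comm]
  have hlim := (tendsto_prod_div_prod_Gamma (a := γ - α) (b := γ - β) (c := γ)
    (d := γ - α - β) (by ring)).mul (tendsto_tsum_hypergeomCoeff_add_natCast α β γ h1 hγ)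
  simp only [hfactor, mul_one] at hlim
  rw [← tendsto_nhds_unique tendsto_const_nhds hlim]
  exact (summable_norm_hypergeomCoeff α β γ h1).of_norm.hasSum
end

section
/- Let X = (x_1,...,x_n) be uniform on the unit sphere of ℂ^n with n ≥ 2, and define the rank-one matrix P = (p_{ij}) by p_{ij} = x_i·conj(x_j)/(1-conj(x_n)) for i,j < n; p_{nj} = -((1-x_n)/(1-conj(x_n)))·conj(x_j) for j < n; p_{in} = -x_i for i < n; p_{nn} = 1-x_n. Let A = (a_{ij}) and B = (b_{ij}) be n×n matrices of nonnegative integers. If there exists k ∈ {1,...,n} such that the k-th column sum of A plus the k-th row sum of B differs from the k-th row sum of A plus the k-th column sum of B, then E[∏_{i,j} p_{ij}^{a_{ij}}·conj(p_{ij})^{b_{ij}}] = 0. -/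
open MeasureTheory Finset

/-- The rank-one matrix `P = I - R`, where `R` is the unique complex reflection
sending `e_n` to `x`, written in coordinates (indices `0,…,n-1`; the "n-th"
coordinate of the paper is the index `n-1` here). -/
noncomputable def pMat (n : ℕ) (x : Fin n → ℂ) : Matrix (Fin n) (Fin n) ℂ :=
  Matrix.of fun i j =>
    let xn : ℂ := x ⟨n - 1, Nat.sub_lt (Nat.zero_lt_of_lt i.isLt) one_pos⟩
    if (i : ℕ) + 1 < n then
      if (j : ℕ) + 1 < n then x i * (starRingEnd ℂ) (x j) / (1 - (starRingEnd ℂ) xn)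
      else - x i
    else
      if (j : ℕ) + 1 < n then
        -((1 - xn) / (1 - (starRingEnd ℂ) xn)) * (starRingEnd ℂ) (x j)
      else 1 - xn

/-- The complex reflection matrix `R = I - P` sending `e_n` to `x`. -/
noncomputable def rMat (n : ℕ) (x : Fin n → ℂ) : Matrix (Fin n) (Fin n) ℂ :=
  1 - pMat n x

/-- Rising factorial `n^{↑m} = n(n+1)⋯(n+m-1)` as a complex number. -/
noncomputable def ascC (n m : ℕ) : ℂ := ∏ j ∈ Finset.range m, ((n : ℂ) + j)

/-!
Multiplying `X` by a diagonal unitary `D = diag(d)` with `d_n = 1` preserves its law and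
conjugates `P` into `D P D⋆`, so the moment gets multiplied by `∏ₜ d_t ^ r_t * conj d_t ^ s_t`,
where `r_t` is the `t`-th row sum of `A` plus the `t`-th column sum of `B`, and `s_t` the
`t`-th column sum of `A` plus the `t`-th row sum of `B`. Since `∑ r_t = ∑ s_t`, a `k` with
`r_k ≠ s_k` yields some `j ≠ n` with `r_j ≠ s_j`. Taking for `d_j` a phase with
`d_j ^ r_j * conj d_j ^ s_j ≠ 1` and all other `d_t = 1`, the moment equals a multiple
of itself by a factor `≠ 1`, hence vanishes.
-/

open Matrix ComplexConjugate

theorem MeasureTheory.MeasurePreserving.integral_eq_zero_of_comp_eq_smul {α E : Type*}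
    [MeasurableSpace α] [NormedAddCommGroup E] [NormedSpace ℂ E] {μ : Measure α} {T : α → α}
    {F : α → E} {s : ℂ} (hT : MeasurePreserving T μ μ) (hF : AEStronglyMeasurable F μ)
    (hFT : ∀ x, F (T x) = s • F x) (hs : s ≠ 1) : ∫ x, F x ∂μ = 0 := by
  have hF' : AEStronglyMeasurable F (μ.map T) := by rwa [hT.map_eq]
  have hinv : ∫ x, F x ∂μ = s • ∫ x, F x ∂μ :=
    calc ∫ x, F x ∂μ = ∫ x, F x ∂(μ.map T) := by rw [hT.map_eq]
      _ = ∫ x, F (T x) ∂μ := integral_map hT.aemeasurable hF'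
      _ = s • ∫ x, F x ∂μ := by simp only [hFT, integral_smul]
  have : (1 - s) • ∫ x, F x ∂μ = 0 := by rw [sub_smul, one_smul, ← hinv, sub_self]
  exact (smul_eq_zero.mp this).resolve_left (sub_ne_zero.mpr hs.symm)

theorem Fintype.exists_ne_and_ne_of_sum_eq {ι M : Type*} [Fintype ι] [AddCancelCommMonoid M]
    {p q : ι → M} (hsum : ∑ t, p t = ∑ t, q t) {k : ι} (hk : p k ≠ q k) (e : ι) :
    ∃ j ≠ e, p j ≠ q j := by
  classical
  by_contra! h
  have he : p e = q e := by
    rw [← add_sum_erase _ _ (mem_univ e), ← add_sum_erase _ _ (mem_univ e),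
      Finset.sum_congr rfl fun t ht => h t (ne_of_mem_erase ht)] at hsum
    exact add_right_cancel hsum
  exact hk (if hke : k = e then hke ▸ he else h k hke)

theorem Circle.exists_pow_mul_conj_pow_ne_one {p q : ℕ} (hpq : p ≠ q) :
    ∃ c : Circle, (c : ℂ) ^ p * conj (c : ℂ) ^ q ≠ 1 := by
  refine ⟨Circle.exp (Real.pi / (p - q)), ?_⟩
  have hpq' : (p : ℝ) - q ≠ 0 := sub_ne_zero.mpr (by exact_mod_cast hpq)
  rw [← Circle.coe_inv_eq_conj, ← Circle.coe_pow, ← Circle.coe_pow, ← Circle.coe_mul, Ne,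
    Circle.coe_eq_one, inv_pow, ← zpow_natCast, ← zpow_natCast, ← _root_.zpow_sub,
    ← Circle.exp_intCast_mul]
  push_cast
  rw [mul_div_cancel₀ _ hpq']
  exact Circle.exp_pi_ne_one

theorem Matrix.diagonal_coe_mem_unitaryGroup {ι : Type*} [Fintype ι] [DecidableEq ι]
    (d : ι → Circle) :
    diagonal (fun t => (d t : ℂ)) ∈ unitaryGroup ι ℂ := by
  rw [mem_unitaryGroup_iff, star_eq_conjTranspose, diagonal_conjTranspose, diagonal_mul_diagonal]
  simp [← Circle.coe_inv_eq_conj, ← diagonal_one]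

section Monomial

variable {ι : Type*} [Fintype ι] (A B : Matrix ι ι ℕ)

def conjMonomial (M : Matrix ι ι ℂ) : ℂ := ∏ i, ∏ j, M i j ^ A i j * conj (M i j) ^ B i j

theorem sum_rowSum_add_colSum_eq_sum_colSum_add_rowSum :
    ∑ t, (∑ j, A t j + ∑ i, B i t) = ∑ t, (∑ i, A i t + ∑ j, B t j) := by
  rw [sum_add_distrib, sum_add_distrib, sum_comm (f := fun t j => A t j),
    sum_comm (f := fun i t => B i t)]

theorem conjMonomial_diagonal_mul_mul_star [DecidableEq ι] (d : ι → ℂ) (M : Matrix ι ι ℂ) :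
    conjMonomial A B (diagonal d * M * star (diagonal d)) =
      (∏ t, d t ^ (∑ j, A t j + ∑ i, B i t) * conj (d t) ^ (∑ i, A i t + ∑ j, B t j)) *
        conjMonomial A B M := by
  have hrow (f : ι → ℂ) (C : Matrix ι ι ℕ) :
      ∏ i, ∏ j, f i ^ C i j = ∏ i, f i ^ ∑ j, C i j := by
    simp only [prod_pow_eq_pow_sum]
  have hcol (f : ι → ℂ) (C : Matrix ι ι ℕ) :
      ∏ i, ∏ j, f j ^ C i j = ∏ j, f j ^ ∑ i, C i j := by
    rw [prod_comm]
    exact hrow f Cᵀ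
  calc conjMonomial A B (diagonal d * M * star (diagonal d))
      = ∏ i, ∏ j, (d i ^ A i j * conj (d i) ^ B i j) * (d j ^ B i j * conj (d j) ^ A i j) *
          (M i j ^ A i j * conj (M i j) ^ B i j) := by
        unfold conjMonomial
        simp only [star_eq_conjTranspose, diagonal_conjTranspose, mul_diagonal, diagonal_mul,
          Pi.star_apply, Complex.star_def, map_mul, Complex.conj_conj]
        refine prod_congr rfl fun i _ => prod_congr rfl fun j _ => ?_
        ring
    _ = _ := by
        simp only [conjMonomial, prod_mul_distrib, hrow, hcol, pow_add]
        ring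

end Monomial

theorem measurable_pMat_apply (n : ℕ) (i j : Fin n) :
    Measurable fun x => pMat n x i j := by
  simp only [pMat, Matrix.of_apply]
  split_ifs <;> fun_prop

theorem measurable_conjMonomial_pMat {n : ℕ} (A B : Matrix (Fin n) (Fin n) ℕ) :
    Measurable fun x => conjMonomial A B (pMat n x) := by
  have := measurable_pMat_apply n
  unfold conjMonomial
  fun_prop

theorem pMat_diagonal_mulVec {n : ℕ} (d x : Fin n → ℂ)
    (hd : ∀ t : Fin n, (t : ℕ) + 1 = n → d t = 1) :
    pMat n (diagonal d *ᵥ x) = diagonal d * pMat n x * star (diagonal d) := by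
  ext i j
  have := i.isLt
  have hlast : d ⟨n - 1, by omega⟩ = 1 := hd _ (by simp only; omega)
  simp only [pMat, Matrix.of_apply, mulVec_diagonal, star_eq_conjTranspose, diagonal_conjTranspose,
    mul_diagonal, diagonal_mul, Pi.star_apply, Complex.star_def, map_mul, hlast, one_mul]
  split_ifs with hi hj hj
  · ring
  · rw [hd j (by omega)]; simp
  · rw [hd i (by omega)]; ring
  · rw [hd i (by omega), hd j (by omega)]; simp

theorem pMat_moment_vanish_general (n : ℕ)
    (μ : Measure (Fin n → ℂ))
    (hinv : ∀ U : Matrix.unitaryGroup (Fin n) ℂ,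
      MeasurePreserving (fun x : Fin n → ℂ =>
        Matrix.mulVec (U : Matrix (Fin n) (Fin n) ℂ) x) μ μ)
    (A B : Matrix (Fin n) (Fin n) ℕ) (k : Fin n)
    (hk : (∑ i, A i k) + (∑ j, B k j) ≠ (∑ j, A k j) + (∑ i, B i k)) :
    ∫ x, ∏ i, ∏ j,
        (pMat n x i j) ^ (A i j) * ((starRingEnd ℂ) (pMat n x i j)) ^ (B i j) ∂μ = 0 := by
  classical
  have := k.isLt
  obtain ⟨j, hj_last, hj⟩ := Fintype.exists_ne_and_ne_of_sum_eq
    (sum_rowSum_add_colSum_eq_sum_colSum_add_rowSum A B) hk.symm ⟨n - 1, by omega⟩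
  obtain ⟨c, hc⟩ := Circle.exists_pow_mul_conj_pow_ne_one hj
  set d : Fin n → Circle := Pi.mulSingle j c
  have hd : ∀ t, t ≠ j → (d t : ℂ) = 1 := fun t ht => by simp [d, ht]
  have hd_last : ∀ t : Fin n, (t : ℕ) + 1 = n → (d t : ℂ) = 1 := fun t ht =>
    hd t (by rintro rfl; exact hj_last (Fin.ext (by simp only; omega)))
  refine (hinv ⟨_, diagonal_coe_mem_unitaryGroup d⟩).integral_eq_zero_of_comp_eq_smul
    (measurable_conjMonomial_pMat A B).aestronglyMeasurable (fun x => ?_) hc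
  change conjMonomial A B (pMat n (diagonal _ *ᵥ x)) = _ • conjMonomial A B (pMat n x)
  rw [pMat_diagonal_mulVec _ x hd_last, conjMonomial_diagonal_mul_mul_star,
    Fintype.prod_eq_single j fun t ht => by simp [hd t ht], smul_eq_mul]
  simp [d]

/-- Vanishing of moments of the rank-one matrix `P`: if for some `k` the `k`-th column sum
of `A` plus the `k`-th row sum of `B` differs from the `k`-th row sum of `A` plus the `k`-th
column sum of `B`, then `E[∏ p_{ij}^{a_{ij}} conj(p_{ij})^{b_{ij}}] = 0`. -/
theorem pMat_moment_vanish (n : ℕ) (hn : 2 ≤ n)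
    (μ : Measure (Fin n → ℂ)) (hprob : IsProbabilityMeasure μ)
    (hsupp : ∀ᵐ x ∂μ, ∑ i, ‖x i‖ ^ 2 = 1)
    (hinv : ∀ U : Matrix.unitaryGroup (Fin n) ℂ,
      MeasurePreserving (fun x : Fin n → ℂ =>
        Matrix.mulVec (U : Matrix (Fin n) (Fin n) ℂ) x) μ μ)
    (A B : Matrix (Fin n) (Fin n) ℕ) (k : Fin n)
    (hk : (∑ i, A i k) + (∑ j, B k j) ≠ (∑ j, A k j) + (∑ i, B i k)) :
    ∫ x, ∏ i, ∏ j,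
        (pMat n x i j) ^ (A i j) * ((starRingEnd ℂ) (pMat n x i j)) ^ (B i j) ∂μ = 0 :=
  pMat_moment_vanish_general n μ hinv A B k hk
end

section
/- For the complex reflection matrix R = (r_{ij}) built from a uniform vector on the unit sphere of ℂ^n, any 1 ≤ s < n and any positive integer q, E[r_{ss}^q] = (n-1)/(n+q-1); moreover E[r_{nn}^q] = 0. -/
open MeasureTheory Finset

/-!
Write `X = |x_s|²` and `z = conj x_n`. On the sphere `r_ss = 1 - X / (1 - z)`; expanding
`(1 - z)⁻ᵏ` as a power series, invariance under the phase change `x_n ↦ c x_n` kills every term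
with a positive power of `z`, so `E[r_ss^q] = E[(1 - X)^q]`. Invariance under real rotations
in the `(s, t)`-plane makes `Σᵢ C(m,i)² E[X^i |x_t|^{2(m-i)}] r^i (1-r)^{m-i}` constant in
`r ∈ [0, 1]`; differentiating at `r = 1` gives `E[X^{m+1}] = (m+1) E[X^m |x_t|²]`, and summing
over `t ≠ s` against `Σ |x_i|² = 1` yields the Beta(1, n-1) recursion
`(n + m) E[X^{m+1}] = (m+1) E[X^m]`. The mixed moments `E[X^j (1-X)^q]` then satisfy the same
recursion with `n` replaced by `n + q`, whence `(n + q - 1) E[(1-X)^q] = n - 1`.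
Finally `r_nn = x_n`, whose moments vanish by phase invariance.
-/

open ComplexConjugate Filter Topology
open scoped Matrix

theorem mul_succ_eq_of_beta_recursion {R : Type*} [CommRing R] (ν : R) (D : ℕ → ℕ → R)
    (hdiff : ∀ q j, D (q + 1) j = D q j - D q (j + 1))
    (hrec : ∀ j : ℕ, (ν + j) * D 0 (j + 1) = (j + 1) * D 0 j) (q j : ℕ) :
    (ν + q + j) * D q (j + 1) = (j + 1) * D q j := by
  induction q generalizing j with
  | zero => simpa using hrec j
  | succ q ih =>
    rw [hdiff, hdiff]
    push_cast
    have h := ih (j + 1)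
    push_cast at h
    linear_combination ih j - h

theorem mul_zero_eq_of_beta_recursion {R : Type*} [CommRing R] (ν : R) (D : ℕ → ℕ → R)
    (hdiff : ∀ q j, D (q + 1) j = D q j - D q (j + 1))
    (hrec : ∀ j : ℕ, (ν + j) * D 0 (j + 1) = (j + 1) * D 0 j) (h00 : D 0 0 = 1) (q : ℕ) :
    (ν + q - 1) * D q 0 = ν - 1 := by
  induction q with
  | zero => simp [h00]
  | succ q ih =>
    rw [hdiff]
    push_cast
    linear_combination ih - mul_succ_eq_of_beta_recursion ν D hdiff hrec q 0

open Polynomial in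
theorem succ_mul_eq_of_forall_bernstein_sum_eq {m : ℕ} {a : ℕ → ℂ} {b : ℂ}
    (h : ∀ r : ℝ, r ∈ Set.Icc (0 : ℝ) 1 →
      ∑ i ∈ range (m + 2), a i * (r : ℂ) ^ i * (1 - r) ^ (m + 1 - i) = b) :
    (m + 1) * a (m + 1) = a m := by
  set Q : ℂ[X] := ∑ i ∈ range (m + 2), C (a i) * X ^ i * (1 - X) ^ (m + 1 - i)
  have hQ : Q = C b := by
    apply eq_of_infinite_eval_eq
    refine ((Set.Icc_infinite (zero_lt_one' ℝ)).image Complex.ofReal_injective.injOn).mono ?_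
    rintro _ ⟨r, hr, rfl⟩
    simp [Q, eval_finsetSum, h r hr]
  have hderiv := congrArg (fun p => (derivative p).eval 1) hQ
  simp only [Q, derivative_sum, eval_finsetSum] at hderiv
  rw [sum_range_succ, sum_range_succ, sum_eq_zero fun i hi => ?_] at hderiv
  · simp [derivative_mul] at hderiv
    linear_combination hderiv
  · have : m + 1 - i = (m - 1 - i) + 2 := by have := mem_range.1 hi; omega
    simp [this, derivative_mul, pow_succ]

theorem exists_norm_eq_one_pow_mul_conj_pow_ne_one {a b : ℕ} (hab : a ≠ b) :
    ∃ c : ℂ, ‖c‖ = 1 ∧ c ^ a * conj c ^ b ≠ 1 := by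
  have hab' : (a : ℂ) - b ≠ 0 := sub_ne_zero.2 (by exact_mod_cast hab)
  refine ⟨Complex.exp (↑(Real.pi / (a - b)) * Complex.I), Complex.norm_exp_ofReal_mul_I _, ?_⟩
  rw [← Complex.exp_conj, ← Complex.exp_nat_mul, ← Complex.exp_nat_mul, ← Complex.exp_add]
  have : (a : ℂ) * (↑(Real.pi / (a - b)) * Complex.I)
      + b * conj (↑(Real.pi / (a - b)) * Complex.I) = Real.pi * Complex.I := by
    simp only [map_mul, Complex.conj_ofReal, Complex.conj_I]
    push_cast
    field_simp
    ring
  rw [this, Complex.exp_pi_mul_I]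
  norm_num

theorem mul_conj_pow_eq_sum_sum (c d : ℝ) (u v : ℂ) (m : ℕ) :
    ((c * u + d * v) * conj (c * u + d * v)) ^ m
      = ∑ i ∈ range (m + 1), ∑ j ∈ range (m + 1),
          m.choose i * m.choose j * (c : ℂ) ^ (i + j) * (d : ℂ) ^ ((m - i) + (m - j))
            * (v ^ (m - i) * conj v ^ (m - j) * u ^ i * conj u ^ j) := by
  simp only [map_add, map_mul, Complex.conj_ofReal, mul_pow, add_pow, sum_mul_sum]
  refine sum_congr rfl fun i _ => sum_congr rfl fun j _ => ?_
  simp only [pow_add]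
  ring

theorem norm_le_two_mul_one_sub_norm {a z : ℂ} (h : ‖a‖ ≤ 1 - ‖z‖ ^ 2) :
    ‖a‖ ≤ 2 * (1 - ‖z‖) := by
  nlinarith [sq_nonneg (1 - ‖z‖)]

theorem eq_zero_of_norm_le_one_sub_sq {a z : ℂ} (h : ‖a‖ ≤ 1 - ‖z‖ ^ 2) (hz : 1 ≤ ‖z‖) : a = 0 :=
  norm_le_zero_iff.1 (by nlinarith)

theorem tendsto_pow_mul_sum_choose_mul_pow {a z : ℂ} (h : ‖a‖ ≤ 1 - ‖z‖ ^ 2) (k : ℕ) :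
    Tendsto (fun M => a ^ (k + 1) * ∑ m ∈ range M, ((m + k).choose k : ℂ) * z ^ m) atTop
      (𝓝 ((a / (1 - z)) ^ (k + 1))) := by
  rcases lt_or_ge ‖z‖ 1 with hz | hz
  · simpa [div_pow, div_eq_mul_inv, mul_pow] using
      (hasSum_choose_mul_geometric_of_norm_lt_one k hz).tendsto_sum_nat.const_mul (a ^ (k + 1))
  · simp [eq_zero_of_norm_le_one_sub_sq h hz]

theorem norm_pow_mul_sum_choose_mul_pow_le {a z : ℂ} (h : ‖a‖ ≤ 1 - ‖z‖ ^ 2) (k M : ℕ) :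
    ‖a ^ (k + 1) * ∑ m ∈ range M, ((m + k).choose k : ℂ) * z ^ m‖ ≤ 2 ^ (k + 1) := by
  rcases lt_or_ge ‖z‖ 1 with hz | hz
  · have hz' : ‖‖z‖‖ < 1 := by rwa [norm_norm]
    have hpos : 0 < 1 - ‖z‖ := sub_pos.2 hz
    have hsum : ‖∑ m ∈ range M, ((m + k).choose k : ℂ) * z ^ m‖ ≤ 1 / (1 - ‖z‖) ^ (k + 1) :=
      calc _ ≤ ∑ m ∈ range M, ((m + k).choose k : ℝ) * ‖z‖ ^ m :=
            (norm_sum_le _ _).trans_eq (by simp)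
        _ ≤ ∑' m, ((m + k).choose k : ℝ) * ‖z‖ ^ m :=
            (summable_choose_mul_geometric_of_norm_lt_one k hz').sum_le_tsum _
              fun _ _ => by positivity
        _ = 1 / (1 - ‖z‖) ^ (k + 1) := tsum_choose_mul_geometric_of_norm_lt_one k hz'
    calc _ = ‖a‖ ^ (k + 1) * ‖∑ m ∈ range M, ((m + k).choose k : ℂ) * z ^ m‖ := by
          rw [norm_mul, norm_pow]
      _ ≤ (2 * (1 - ‖z‖)) ^ (k + 1) * (1 / (1 - ‖z‖) ^ (k + 1)) := by
          gcongr
          exact norm_le_two_mul_one_sub_norm h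
      _ = 2 ^ (k + 1) := by rw [mul_pow]; field_simp
  · simp [eq_zero_of_norm_le_one_sub_sq h hz]

theorem norm_div_one_sub_le_two {a z : ℂ} (h : ‖a‖ ≤ 1 - ‖z‖ ^ 2) : ‖a / (1 - z)‖ ≤ 2 := by
  simpa using le_of_tendsto' (tendsto_pow_mul_sum_choose_mul_pow h 0).norm
    (norm_pow_mul_sum_choose_mul_pow_le h 0)

theorem integral_one_sub_pow_eq_of_integral_pow_eq {α : Type*} [MeasurableSpace α]
    {ν : Measure α} {f g : α → ℂ} (hf : ∀ k : ℕ, Integrable (fun x => f x ^ k) ν)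
    (hg : ∀ k : ℕ, Integrable (fun x => g x ^ k) ν) (h : ∀ k : ℕ, ∫ x, f x ^ k ∂ν = ∫ x, g x ^ k ∂ν)
    (q : ℕ) : ∫ x, (1 - f x) ^ q ∂ν = ∫ x, (1 - g x) ^ q ∂ν := by
  have hexpand : ∀ y : ℂ, (1 - y) ^ q = ∑ k ∈ range (q + 1), (-1) ^ k * q.choose k * y ^ k :=
    fun y => by
      rw [sub_eq_neg_add, add_pow]
      refine sum_congr rfl fun k _ => ?_
      rw [neg_pow]
      ring
  simp_rw [hexpand]
  rw [integral_finsetSum _ fun k _ => (hf k).const_mul _,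
    integral_finsetSum _ fun k _ => (hg k).const_mul _]
  simp_rw [integral_const_mul, h]

namespace Matrix

variable {ι : Type*} [Fintype ι] [DecidableEq ι]

theorem diagonal_mem_unitaryGroup {v : ι → ℂ} (hv : ∀ i, ‖v i‖ = 1) :
    diagonal v ∈ unitaryGroup ι ℂ := by
  rw [mem_unitaryGroup_iff', star_eq_conjTranspose, diagonal_conjTranspose, diagonal_mul_diagonal,
    ← diagonal_one]
  congr 1
  ext i
  simp [RCLike.star_def, RCLike.conj_mul, hv]

def planeRotation (s t : ι) (c d : ℝ) : Matrix ι ι ℂ :=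
  of fun i j =>
    if i = s then (if j = s then c else if j = t then d else 0)
    else if i = t then (if j = s then -d else if j = t then c else 0)
    else if i = j then 1 else 0

theorem planeRotation_mem_unitaryGroup {s t : ι} (hst : s ≠ t) {c d : ℝ} (hcd : c ^ 2 + d ^ 2 = 1) :
    planeRotation s t c d ∈ unitaryGroup ι ℂ := by
  have hcd' : (c : ℂ) * c + d * d = 1 := by exact_mod_cast (by linear_combination hcd)
  rw [mem_unitaryGroup_iff]
  ext i j
  rw [mul_apply, one_apply]
  by_cases his : i = s <;> by_cases hit : i = t <;> by_cases hjs : j = s <;>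
    by_cases hjt : j = t <;>
    simp [planeRotation, Finset.sum_ite, Finset.filter_eq', Finset.filter_ne', his, hit, hjs, hjt,
      hst, hst.symm, hcd', Complex.conj_ofReal] <;> grind

theorem planeRotation_mulVec_apply_left {s t : ι} (hst : s ≠ t) (c d : ℝ) (x : ι → ℂ) :
    (planeRotation s t c d *ᵥ x) s = c * x s + d * x t := by
  simp [planeRotation, mulVec, dotProduct, Finset.sum_ite, Finset.filter_eq', Finset.filter_ne',
    hst.symm]

end Matrix

section SphereMoments

variable {ι : Type*} [Fintype ι] {μ : Measure (ι → ℂ)}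

-- The Euclidean sphere, written out because `ι → ℂ` carries the sup norm.
def IsSupportedOnUnitSphere (μ : Measure (ι → ℂ)) : Prop :=
  ∀ᵐ x ∂μ, ∑ i, ‖x i‖ ^ 2 = 1

theorem norm_sq_add_norm_sq_le_of_sum_eq_one {x : ι → ℂ} (hx : ∑ i, ‖x i‖ ^ 2 = 1) {s t : ι}
    (hst : s ≠ t) : ‖x s‖ ^ 2 + ‖x t‖ ^ 2 ≤ 1 :=
  hx ▸ Finset.add_le_sum (f := fun i => ‖x i‖ ^ 2) (fun _ _ => sq_nonneg _) (mem_univ s)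
    (mem_univ t) hst

theorem norm_le_one_of_sum_eq_one {x : ι → ℂ} (hx : ∑ i, ‖x i‖ ^ 2 = 1) (i : ι) : ‖x i‖ ≤ 1 := by
  have : ‖x i‖ ^ 2 ≤ 1 := hx ▸ Finset.single_le_sum (fun j _ => sq_nonneg ‖x j‖) (mem_univ i)
  nlinarith [norm_nonneg (x i)]

theorem IsSupportedOnUnitSphere.integrable_of_continuous [IsFiniteMeasure μ]
    (hsupp : IsSupportedOnUnitSphere μ) {E : Type*} [NormedAddCommGroup E] {f : (ι → ℂ) → E}
    (hf : Continuous f) : Integrable f μ := by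
  obtain ⟨C, hC⟩ :=
    (isCompact_closedBall (0 : ι → ℂ) 1).exists_bound_of_continuousOn hf.continuousOn
  refine .of_bound hf.aestronglyMeasurable C ?_
  filter_upwards [hsupp] with x hx
  exact hC x (mem_closedBall_zero_iff.2 ((pi_norm_le_iff_of_nonneg zero_le_one).2
    (norm_le_one_of_sum_eq_one hx)))

theorem IsSupportedOnUnitSphere.ae_norm_mul_conj_le_one_sub_sq
    (hsupp : IsSupportedOnUnitSphere μ) {s t : ι} (hst : s ≠ t) :
    ∀ᵐ x ∂μ, ‖x s * conj (x s)‖ ≤ 1 - ‖conj (x t)‖ ^ 2 := by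
  filter_upwards [hsupp] with x hx
  have := norm_sq_add_norm_sq_le_of_sum_eq_one hx hst
  rw [Complex.norm_conj, norm_mul, Complex.norm_conj]
  linarith

theorem IsSupportedOnUnitSphere.integrable_div_one_sub_conj_pow [IsFiniteMeasure μ]
    (hsupp : IsSupportedOnUnitSphere μ) {s t : ι} (hst : s ≠ t) (k : ℕ) :
    Integrable (fun x => (x s * conj (x s) / (1 - conj (x t))) ^ k) μ :=
  .of_bound (by fun_prop : Measurable _).aestronglyMeasurable (2 ^ k) <| by
    filter_upwards [hsupp.ae_norm_mul_conj_le_one_sub_sq hst] with x hx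
    rw [norm_pow]
    exact pow_le_pow_left₀ (norm_nonneg _) (norm_div_one_sub_le_two hx) k

variable (μ) in
noncomputable def normSqMoment (s : ι) (k : ℕ) : ℂ := ∫ x, (x s * conj (x s)) ^ k ∂μ

variable (μ) in
noncomputable def jointNormSqMoment (s t : ι) (a b : ℕ) : ℂ :=
  ∫ x, (x s * conj (x s)) ^ a * (x t * conj (x t)) ^ b ∂μ

variable [DecidableEq ι]

def IsUnitarilyInvariant (μ : Measure (ι → ℂ)) : Prop :=
  ∀ U : Matrix.unitaryGroup ι ℂ,
    MeasurePreserving (fun x : ι → ℂ => (U : Matrix ι ι ℂ) *ᵥ x) μ μ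

namespace IsUnitarilyInvariant

variable {E : Type*} [NormedAddCommGroup E] [NormedSpace ℝ E]

theorem integral_comp_mulVec (hμ : IsUnitarilyInvariant μ) {U : Matrix ι ι ℂ}
    (hU : U ∈ Matrix.unitaryGroup ι ℂ) {f : (ι → ℂ) → E} (hf : AEStronglyMeasurable f μ) :
    ∫ x, f (U *ᵥ x) ∂μ = ∫ x, f x ∂μ := by
  have h := hμ ⟨U, hU⟩
  rw [← integral_map h.aemeasurable (by rwa [h.map_eq]), h.map_eq]

theorem integral_comp_update_mul (hμ : IsUnitarilyInvariant μ) (i : ι) {c : ℂ} (hc : ‖c‖ = 1)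
    {f : (ι → ℂ) → E} (hf : AEStronglyMeasurable f μ) :
    ∫ x, f (Function.update x i (c * x i)) ∂μ = ∫ x, f x ∂μ := by
  have hU : Matrix.diagonal (Function.update 1 i c) ∈ Matrix.unitaryGroup ι ℂ :=
    Matrix.diagonal_mem_unitaryGroup fun j => by
      rcases eq_or_ne j i with rfl | hj <;> simp [*]
  rw [← hμ.integral_comp_mulVec hU hf]
  congr with x
  congr with j
  rcases eq_or_ne j i with rfl | hj <;> simp [Matrix.mulVec_diagonal, *]

theorem integral_mul_pow_mul_conj_pow_eq_zero (hμ : IsUnitarilyInvariant μ) (i : ι) {a b : ℕ}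
    (hab : a ≠ b) {g : (ι → ℂ) → ℂ} (hg : ∀ x v, g (Function.update x i v) = g x)
    (hmeas : AEStronglyMeasurable (fun x => g x * x i ^ a * conj (x i) ^ b) μ) :
    ∫ x, g x * x i ^ a * conj (x i) ^ b ∂μ = 0 := by
  obtain ⟨c, hc, hc1⟩ := exists_norm_eq_one_pow_mul_conj_pow_ne_one hab
  have h := hμ.integral_comp_update_mul i hc hmeas
  simp only [hg, Function.update_self, mul_pow, map_mul] at h
  have hscale : ∫ x, g x * (c ^ a * x i ^ a) * (conj c ^ b * conj (x i) ^ b) ∂μ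
      = c ^ a * conj c ^ b * ∫ x, g x * x i ^ a * conj (x i) ^ b ∂μ := by
    rw [← integral_const_mul]
    congr with x
    ring
  rw [hscale] at h
  exact (mul_left_eq_self₀.1 h).resolve_left hc1

theorem integral_pow_eq_zero (hμ : IsUnitarilyInvariant μ) (i : ι) {q : ℕ} (hq : q ≠ 0) :
    ∫ x, x i ^ q ∂μ = 0 := by
  simpa using hμ.integral_mul_pow_mul_conj_pow_eq_zero i hq (b := 0) (g := 1) (fun _ _ => rfl)
    (by fun_prop : Measurable fun x : ι → ℂ => 1 * x i ^ q * conj (x i) ^ 0).aestronglyMeasurable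

end IsUnitarilyInvariant

theorem sum_choose_sq_mul_jointNormSqMoment [IsFiniteMeasure μ]
    (hsupp : IsSupportedOnUnitSphere μ) (hμ : IsUnitarilyInvariant μ) {s t : ι} (hst : s ≠ t)
    {c d : ℝ} (hcd : c ^ 2 + d ^ 2 = 1) (m : ℕ) :
    ∑ i ∈ range (m + 1), (m.choose i : ℂ) ^ 2 * ((c : ℂ) ^ 2) ^ i * ((d : ℂ) ^ 2) ^ (m - i)
      * jointNormSqMoment μ s t i (m - i) = normSqMoment μ s m := by
  set coeff : ℕ → ℕ → ℂ := fun i j =>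
    m.choose i * m.choose j * (c : ℂ) ^ (i + j) * (d : ℂ) ^ ((m - i) + (m - j))
  set mono : ℕ → ℕ → (ι → ℂ) → ℂ := fun i j x =>
    x t ^ (m - i) * conj (x t) ^ (m - j) * x s ^ i * conj (x s) ^ j
  have hexpand : ∀ x : ι → ℂ, ((c * x s + d * x t) * conj (c * x s + d * x t)) ^ m
      = ∑ i ∈ range (m + 1), ∑ j ∈ range (m + 1), coeff i j * mono i j x :=
    fun x => mul_conj_pow_eq_sum_sum c d (x s) (x t) m
  have hmono : ∀ i j, Integrable (mono i j) μ := fun i j =>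
    hsupp.integrable_of_continuous (by fun_prop)
  have hcross : ∀ i j, j ≠ i → ∫ x, mono i j x ∂μ = 0 := fun i j hji =>
    hμ.integral_mul_pow_mul_conj_pow_eq_zero s hji.symm
      (fun x v => by simp [Function.update_of_ne hst.symm]) (hmono i j).aestronglyMeasurable
  have hdiag : ∀ i, ∫ x, mono i i x ∂μ = jointNormSqMoment μ s t i (m - i) := fun i => by
    simp only [mono, jointNormSqMoment]
    congr with x
    ring
  calc _ = ∑ i ∈ range (m + 1), coeff i i * ∫ x, mono i i x ∂μ := by
        refine sum_congr rfl fun i _ => ?_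
        rw [hdiag]
        simp only [coeff]
        ring
    _ = ∫ x, ∑ i ∈ range (m + 1), ∑ j ∈ range (m + 1), coeff i j * mono i j x ∂μ := by
        rw [integral_finsetSum _ fun i _ =>
          integrable_finsetSum _ fun j _ => (hmono i j).const_mul _]
        refine sum_congr rfl fun i hi => ?_
        rw [integral_finsetSum _ fun j _ => (hmono i j).const_mul _,
          sum_eq_single i (fun j _ hji => by rw [integral_const_mul, hcross i j hji, mul_zero])
            (fun h => absurd hi h), integral_const_mul]
    _ = ∫ x, ((Matrix.planeRotation s t c d *ᵥ x) s
          * conj ((Matrix.planeRotation s t c d *ᵥ x) s)) ^ m ∂μ := by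
        simp_rw [Matrix.planeRotation_mulVec_apply_left hst, hexpand]
    _ = normSqMoment μ s m :=
        hμ.integral_comp_mulVec (f := fun y => (y s * conj (y s)) ^ m)
          (Matrix.planeRotation_mem_unitaryGroup hst hcd)
          (hsupp.integrable_of_continuous (by fun_prop)).aestronglyMeasurable

theorem normSqMoment_succ_eq_mul_jointNormSqMoment [IsFiniteMeasure μ]
    (hsupp : IsSupportedOnUnitSphere μ) (hμ : IsUnitarilyInvariant μ) {s t : ι} (hst : s ≠ t)
    (m : ℕ) : normSqMoment μ s (m + 1) = (m + 1) * jointNormSqMoment μ s t m 1 := by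
  have h := succ_mul_eq_of_forall_bernstein_sum_eq (m := m) (b := normSqMoment μ s (m + 1))
    (a := fun i => ((m + 1).choose i : ℂ) ^ 2 * jointNormSqMoment μ s t i (m + 1 - i))
    fun r hr => by
      have hr' : 0 ≤ 1 - r := sub_nonneg.2 hr.2
      have hc : ((√r : ℝ) : ℂ) ^ 2 = r := by rw [← Complex.ofReal_pow, Real.sq_sqrt hr.1]
      have hd : ((√(1 - r) : ℝ) : ℂ) ^ 2 = 1 - r := by
        rw [← Complex.ofReal_pow, Real.sq_sqrt hr', Complex.ofReal_sub, Complex.ofReal_one]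
      rw [← sum_choose_sq_mul_jointNormSqMoment hsupp hμ hst (c := √r) (d := √(1 - r))
        (by rw [Real.sq_sqrt hr.1, Real.sq_sqrt hr']; ring), hc, hd]
      exact sum_congr rfl fun i _ => by ring
  have hm : ((m : ℂ) + 1) ≠ 0 := Nat.cast_add_one_ne_zero m
  have hlast : jointNormSqMoment μ s t (m + 1) 0 = normSqMoment μ s (m + 1) := by
    simp [jointNormSqMoment, normSqMoment]
  simp only [Nat.choose_self, Nat.choose_succ_self_right, Nat.sub_self, Nat.cast_one,
    one_pow, one_mul, add_tsub_cancel_left, hlast] at h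
  apply mul_left_cancel₀ hm
  push_cast at h
  linear_combination h

theorem normSqMoment_eq_add_sum [IsFiniteMeasure μ] (hsupp : IsSupportedOnUnitSphere μ)
    (s : ι) (m : ℕ) :
    normSqMoment μ s m
      = normSqMoment μ s (m + 1) + ∑ i ∈ univ.erase s, jointNormSqMoment μ s i m 1 := by
  have hsum : ∀ᵐ x ∂μ, ∑ i, x i * conj (x i) = 1 := by
    filter_upwards [hsupp] with x hx
    simp_rw [Complex.mul_conj']
    exact_mod_cast hx
  calc normSqMoment μ s m = ∫ x, ∑ i, (x s * conj (x s)) ^ m * (x i * conj (x i)) ∂μ :=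
        integral_congr_ae (by filter_upwards [hsum] with x hx; rw [← mul_sum, hx, mul_one])
    _ = ∑ i, jointNormSqMoment μ s i m 1 := by
        rw [integral_finsetSum _ fun i _ => hsupp.integrable_of_continuous (by fun_prop)]
        simp [jointNormSqMoment]
    _ = _ := by
        rw [← add_sum_erase _ _ (mem_univ s)]
        simp [jointNormSqMoment, normSqMoment, pow_succ]

theorem card_add_mul_normSqMoment_succ [IsFiniteMeasure μ]
    (hsupp : IsSupportedOnUnitSphere μ) (hμ : IsUnitarilyInvariant μ) (s : ι) (m : ℕ) :
    (Fintype.card ι + m) * normSqMoment μ s (m + 1) = (m + 1) * normSqMoment μ s m := by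
  have hrest : (m + 1) * ∑ i ∈ univ.erase s, jointNormSqMoment μ s i m 1
      = (Fintype.card ι - 1) * normSqMoment μ s (m + 1) := by
    rw [mul_sum, sum_congr rfl fun i hi => (normSqMoment_succ_eq_mul_jointNormSqMoment hsupp hμ
      (ne_of_mem_erase hi).symm m).symm, sum_const, card_erase_of_mem (mem_univ s), card_univ,
      nsmul_eq_mul, Nat.cast_sub (Fintype.card_pos_iff.2 ⟨s⟩), Nat.cast_one]
  linear_combination (-(m + 1 : ℂ)) * normSqMoment_eq_add_sum hsupp s m - hrest

theorem card_add_sub_one_mul_integral_one_sub_pow [IsProbabilityMeasure μ]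
    (hsupp : IsSupportedOnUnitSphere μ) (hμ : IsUnitarilyInvariant μ) (s : ι) (q : ℕ) :
    (Fintype.card ι + q - 1) * ∫ x, (1 - x s * conj (x s)) ^ q ∂μ = Fintype.card ι - 1 := by
  set D : ℕ → ℕ → ℂ := fun q j => ∫ x, (x s * conj (x s)) ^ j * (1 - x s * conj (x s)) ^ q ∂μ
  have hdiff : ∀ q j, D (q + 1) j = D q j - D q (j + 1) := fun q j => by
    simp only [D]
    rw [← integral_sub (hsupp.integrable_of_continuous (by fun_prop))
      (hsupp.integrable_of_continuous (by fun_prop))]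
    congr with x
    ring
  have hmoment : ∀ j, D 0 j = normSqMoment μ s j := by simp [D, normSqMoment]
  simpa [D] using mul_zero_eq_of_beta_recursion (Fintype.card ι : ℂ) D hdiff
    (fun j => by simpa [hmoment] using card_add_mul_normSqMoment_succ hsupp hμ s j)
    (by simp [hmoment, normSqMoment]) q

theorem integral_div_one_sub_conj_pow [IsFiniteMeasure μ] (hsupp : IsSupportedOnUnitSphere μ)
    (hμ : IsUnitarilyInvariant μ) {s t : ι} (hst : s ≠ t) (k : ℕ) :
    ∫ x, (x s * conj (x s) / (1 - conj (x t))) ^ k ∂μ = normSqMoment μ s k := by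
  cases k with
  | zero => simp [normSqMoment]
  | succ k =>
    set F : ℕ → (ι → ℂ) → ℂ := fun M x =>
      (x s * conj (x s)) ^ (k + 1) * ∑ m ∈ range M, ((m + k).choose k : ℂ) * conj (x t) ^ m
    have hpair := hsupp.ae_norm_mul_conj_le_one_sub_sq hst
    have hlim : Tendsto (fun M => ∫ x, F M x ∂μ) atTop
        (𝓝 (∫ x, (x s * conj (x s) / (1 - conj (x t))) ^ (k + 1) ∂μ)) :=
      tendsto_integral_of_dominated_convergence (fun _ => 2 ^ (k + 1))
        (fun M => (hsupp.integrable_of_continuous (by fun_prop)).aestronglyMeasurable)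
        (integrable_const _)
        (fun M => by
          filter_upwards [hpair] with x hx using norm_pow_mul_sum_choose_mul_pow_le hx k M)
        (by filter_upwards [hpair] with x hx using tendsto_pow_mul_sum_choose_mul_pow hx k)
    have hphase : ∀ m, m ≠ 0 → ∫ x, (x s * conj (x s)) ^ (k + 1) * conj (x t) ^ m ∂μ = 0 :=
      fun m hm => by
        simpa using hμ.integral_mul_pow_mul_conj_pow_eq_zero t (a := 0) hm.symm
          (g := fun x => (x s * conj (x s)) ^ (k + 1))
          (fun x v => by simp [Function.update_of_ne hst])
          (hsupp.integrable_of_continuous (by fun_prop)).aestronglyMeasurable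
    have hpartial : ∀ M, 1 ≤ M → ∫ x, F M x ∂μ = normSqMoment μ s (k + 1) := fun M hM => by
      simp only [F, mul_sum, mul_left_comm _ ((_ : ℕ) : ℂ)]
      rw [integral_finsetSum _ fun m _ =>
          (hsupp.integrable_of_continuous (by fun_prop)).const_mul _,
        sum_eq_single 0 (fun m _ hm => by rw [integral_const_mul, hphase m hm, mul_zero])
          (fun h => absurd (mem_range.2 hM) h)]
      simp [normSqMoment]
    exact tendsto_nhds_unique hlim (tendsto_const_nhds.congr'
      ((eventually_ge_atTop 1).mono fun M hM => (hpartial M hM).symm))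

end SphereMoments

/-- For the complex reflection matrix `R` built from a uniform vector on the unit sphere of
`ℂ^n`: for `1 ≤ s < n` and a positive integer `q`, `E[r_{ss}^q] = (n-1)/(n+q-1)`;
moreover `E[r_{nn}^q] = 0`. -/
theorem rMat_diag_power_moment (n : ℕ)
    (μ : Measure (Fin n → ℂ)) (hprob : IsProbabilityMeasure μ)
    (hsupp : ∀ᵐ x ∂μ, ∑ i, ‖x i‖ ^ 2 = 1)
    (hinv : ∀ U : Matrix.unitaryGroup (Fin n) ℂ,
      MeasurePreserving (fun x : Fin n → ℂ =>
        Matrix.mulVec (U : Matrix (Fin n) (Fin n) ℂ) x) μ μ)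
    (s : Fin n) (hs : (s : ℕ) + 1 < n) (q : ℕ) (hq : 0 < q) :
    (∫ x, (rMat n x s s) ^ q ∂μ = ((n : ℂ) - 1) / ((n : ℂ) + q - 1)) ∧
    (∫ x, (rMat n x ⟨n - 1, by omega⟩ ⟨n - 1, by omega⟩) ^ q ∂μ = 0) := by
  have hS : IsSupportedOnUnitSphere μ := hsupp
  have hμ : IsUnitarilyInvariant μ := hinv
  set w : Fin n := ⟨n - 1, by omega⟩
  have hsw : s ≠ w := Fin.ne_of_val_ne (by simp [w]; omega)
  constructor
  · have hentry : ∀ x, rMat n x s s = 1 - x s * conj (x s) / (1 - conj (x w)) := fun x => by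
      simp [rMat, pMat, hs, w]
    simp_rw [hentry]
    rw [integral_one_sub_pow_eq_of_integral_pow_eq (hS.integrable_div_one_sub_conj_pow hsw)
      (fun k => hS.integrable_of_continuous (by fun_prop))
      (integral_div_one_sub_conj_pow hS hμ hsw) q]
    have h := card_add_sub_one_mul_integral_one_sub_pow hS hμ s q
    rw [Fintype.card_fin] at h
    have hne : (n : ℂ) + q - 1 ≠ 0 := by
      have : ((n - 1 + q : ℕ) : ℂ) ≠ 0 := Nat.cast_ne_zero.2 (by omega)
      rwa [Nat.cast_add, Nat.cast_pred (by omega), sub_add_eq_add_sub] at this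
    rw [eq_div_iff hne, mul_comm, h]
  · have hentry : ∀ x, rMat n x w w = x w := fun x => by
      simp [rMat, pMat, w, show ¬n - 1 + 1 < n by omega]
    simp_rw [hentry]
    exact hμ.integral_pow_eq_zero w hq.ne'
end
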